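/- Let k be an odd integer. In the ring Z[y,z]/(y², 2z - k·y), in the degree-2 component we have 4·z² = 0, while 2·z² = k²·y·z ≠ 0; hence the degree-2 component is isomorphic to Z/4 generated by z². -/
import Mathlib


open MvPolynomial

set_option maxHeartbeats 1600000

/-- The ring `ℤ[y,z]/(y², 2z - k·y)` for an integer `k`. -/
noncomputable abbrev Stmt1.R (k : ℤ) : Type :=
  MvPolynomial (Fin 2) ℤ ⧸
    Ideal.span ({(X 0 : MvPolynomial (Fin 2) ℤ) ^ 2, 2 * X 1 - C k * X 0} :
      Set (MvPolynomial (Fin 2) ℤ))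

/-- For odd `k`, in the ring `ℤ[y,z]/(y², 2z - k·y)` one has `4·z² = 0`,
`2·z² = k²·(y·z) ≠ 0`, and the degree-2 component (generated by the images of
`y²`, `y·z`, `z²`) is cyclic of order 4 generated by the image of `z²`. -/
theorem stmt_1 (k : ℤ) (hk : Odd k)
    (π : MvPolynomial (Fin 2) ℤ →+* Stmt1.R k)
    (hπ : π = Ideal.Quotient.mk _) :
    (4 : ℤ) • π ((X 1) ^ 2) = 0 ∧
    (2 : ℤ) • π ((X 1) ^ 2) = (k ^ 2) • π ((X 0) * (X 1)) ∧
    (2 : ℤ) • π ((X 1) ^ 2) ≠ 0 ∧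
    addOrderOf (π ((X 1) ^ 2)) = 4 ∧
    AddSubgroup.closure
        ({π ((X 0) ^ 2), π ((X 0) * (X 1)), π ((X 1) ^ 2)} : Set (Stmt1.R k)) =
      AddSubgroup.zmultiples (π ((X 1) ^ 2)) := by
  obtain ⟨m, hm⟩ := hk
  set I : Ideal (MvPolynomial (Fin 2) ℤ) :=
    Ideal.span ({(X 0 : MvPolynomial (Fin 2) ℤ) ^ 2, 2 * X 1 - C k * X 0} :
      Set (MvPolynomial (Fin 2) ℤ)) with hI
  -- basic relations in the quotient
  set Y : Stmt1.R k := π (X 0) with hY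
  set Z : Stmt1.R k := π (X 1) with hZ
  have hmem1 : (X 0 : MvPolynomial (Fin 2) ℤ) ^ 2 ∈ I :=
    Ideal.subset_span (by simp)
  have hmem2 : (2 * X 1 - C k * X 0 : MvPolynomial (Fin 2) ℤ) ∈ I :=
    Ideal.subset_span (by simp)
  have hy2 : Y ^ 2 = 0 := by
    rw [hY, ← map_pow, hπ]
    exact Ideal.Quotient.eq_zero_iff_mem.mpr hmem1
  have hCk : π (C k) = (k : Stmt1.R k) :=
    eq_intCast (π.comp (C : ℤ →+* MvPolynomial (Fin 2) ℤ)) k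
  have hz2 : 2 * Z = (k : Stmt1.R k) * Y := by
    have h0 : π (2 * X 1 - C k * X 0) = 0 := by
      rw [hπ]; exact Ideal.Quotient.eq_zero_iff_mem.mpr hmem2
    have := h0
    rw [map_sub, map_mul, map_mul, hCk, sub_eq_zero, map_ofNat] at this
    exact this
  have hkR : (k : Stmt1.R k) = 2 * (m : Stmt1.R k) + 1 := by
    rw [hm]; push_cast; ring
  -- key identities
  have hA : 2 * Z ^ 2 = (k : Stmt1.R k) * (Y * Z) := by
    linear_combination Z * hz2
  have hB : 2 * (Y * Z) = 0 := by
    linear_combination Y * hz2 + (k : Stmt1.R k) * hy2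
  have h4 : 4 * Z ^ 2 = 0 := by
    linear_combination 2 * hA + (k : Stmt1.R k) * hB
  have hYZ : Y * Z = 2 * Z ^ 2 := by
    rw [hkR] at hA
    linear_combination -hA - (m : Stmt1.R k) * hB
  have hπZ2 : π (X 1 ^ 2) = Z ^ 2 := by rw [map_pow]
  have hπYZ : π (X 0 * X 1) = Y * Z := by rw [map_mul]
  -- the evaluation homomorphism to ZMod 4
  set φ : MvPolynomial (Fin 2) ℤ →+* ZMod 4 :=
    (aeval ![(2 : ZMod 4), 1]).toRingHom with hφ
  have hφ1 : φ ((X 0 : MvPolynomial (Fin 2) ℤ) ^ 2) = 0 := by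
    simp only [hφ, AlgHom.toRingHom_eq_coe, RingHom.coe_coe, map_pow, aeval_X,
      Matrix.cons_val_zero]
    decide
  have hφ2 : φ (2 * X 1 - C k * X 0) = 0 := by
    simp only [hφ, AlgHom.toRingHom_eq_coe, RingHom.coe_coe, map_sub, map_mul, map_ofNat,
      aeval_X, aeval_C, algebraMap_int_eq, Int.coe_castRingHom, Matrix.cons_val_zero,
      Matrix.cons_val_one, Matrix.head_cons]
    have h0 : ((2 - 2 * k : ℤ) : ZMod 4) = 0 := by
      rw [ZMod.intCast_zmod_eq_zero_iff_dvd]; omega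
    push_cast at h0 ⊢
    linear_combination h0
  have hker : I ≤ RingHom.ker φ := by
    rw [hI, Ideal.span_le]
    rintro p hp
    simp only [Set.mem_insert_iff, Set.mem_singleton_iff] at hp
    rcases hp with rfl | rfl
    · exact hφ1
    · exact hφ2
  set ψ : Stmt1.R k →+* ZMod 4 :=
    Ideal.Quotient.lift I φ (fun a ha => hker ha) with hψ
  have hψmk : ∀ p, ψ (Ideal.Quotient.mk I p) = φ p := fun p =>
    Ideal.Quotient.lift_mk I φ _
  have hψZ : ψ Z = 1 := by
    rw [hZ, hπ, hψmk]
    simp [hφ]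
  have hψZ2 : ψ (Z ^ 2) = 1 := by rw [map_pow, hψZ, one_pow]
  have h2ne : (2 : ℤ) • Z ^ 2 ≠ 0 := by
    intro h
    have h2' := congrArg ψ h
    rw [two_zsmul, map_add, hψZ2, map_zero] at h2'
    exact (by decide : (1 : ZMod 4) + 1 ≠ 0) h2'
  -- the addOrderOf claim
  have hord : addOrderOf (Z ^ 2) = 4 := by
    have hdvd1 : addOrderOf (Z ^ 2) ∣ 4 := by
      apply addOrderOf_dvd_of_nsmul_eq_zero
      rw [nsmul_eq_mul]
      push_cast
      linear_combination h4
    have hdvd2 : 4 ∣ addOrderOf (Z ^ 2) := by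
      have h := addOrderOf_map_dvd ψ.toAddMonoidHom (Z ^ 2)
      simp only [RingHom.toAddMonoidHom_eq_coe, AddMonoidHom.coe_coe, hψZ2] at h
      simpa using h
    exact Nat.dvd_antisymm hdvd1 hdvd2
  refine ⟨?_, ?_, ?_, ?_, ?_⟩
  · rw [hπZ2, zsmul_eq_mul]
    push_cast
    linear_combination h4
  · rw [hπZ2, hπYZ, zsmul_eq_mul, zsmul_eq_mul]
    rw [hkR] at hA
    push_cast
    rw [hkR]
    linear_combination hA - ((m : Stmt1.R k) * (2 * (m : Stmt1.R k) + 1)) * hB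
  · rw [hπZ2]; exact h2ne
  · rw [hπZ2]; exact hord
  · rw [hπZ2, hπYZ]
    have hπY2 : π (X 0 ^ 2) = 0 := by
      rw [map_pow]; exact hy2
    rw [hπY2]
    apply le_antisymm
    · rw [AddSubgroup.closure_le]
      rintro x hx
      simp only [Set.mem_insert_iff, Set.mem_singleton_iff] at hx
      rcases hx with rfl | rfl | rfl
      · exact zero_mem _
      · rw [hYZ]
        exact ⟨(2 : ℤ), by simp [zsmul_eq_mul]⟩
      · exact AddSubgroup.mem_zmultiples _
    · rw [AddSubgroup.zmultiples_le]
      exact AddSubgroup.subset_closure (by simp)
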